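/- Let Person be a type equipped with a binary relation <, and let Room, Cabinet, Thing be types. Let roomTOcabinet : Room → Cabinet → Prop, cabinetTOthing : Cabinet → Thing → Prop, personTOthing : Person → Thing → Prop, cabinet : Cabinet → Prop, and cabinetHasRoom : Cabinet → Prop be predicates. Assume: (H1) for all C and T, cabinetTOthing C T implies cabinet C; (H2) for all C, cabinet C implies cabinetHasRoom C; (H3) for all C, cabinetHasRoom C implies there exists R with roomTOcabinet R C; and (H4) for all R, C, T1, T2, P1, P2, it is not the case that roomTOcabinet R C ∧ cabinetTOthing C T1 ∧ personTOthing P1 T1 ∧ cabinetTOthing C T2 ∧ personTOthing P2 T2 ∧ P1 < P2. Then for all C, T1, T2, P1, P2, it is not the case that cabinetTOthing C T1 ∧ personTOthing P1 T1 ∧ cabinetTOthing C T2 ∧ personTOthing P2 T2 ∧ P1 < P2. -/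
import Mathlib

theorem hcp_reduce_learned_constraint
    (Person : Type) [LT Person] (Room Cabinet Thing : Type)
    (roomTOcabinet : Room → Cabinet → Prop)
    (cabinetTOthing : Cabinet → Thing → Prop)
    (personTOthing : Person → Thing → Prop)
    (cabinet : Cabinet → Prop)
    (cabinetHasRoom : Cabinet → Prop)
    (H1 : ∀ C T, cabinetTOthing C T → cabinet C)
    (H2 : ∀ C, cabinet C → cabinetHasRoom C)
    (H3 : ∀ C, cabinetHasRoom C → ∃ R, roomTOcabinet R C)
    (H4 : ∀ R C T1 T2 P1 P2,
      ¬ (roomTOcabinet R C ∧ cabinetTOthing C T1 ∧ personTOthing P1 T1 ∧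
         cabinetTOthing C T2 ∧ personTOthing P2 T2 ∧ P1 < P2)) :
    ∀ C T1 T2 P1 P2,
      ¬ (cabinetTOthing C T1 ∧ personTOthing P1 T1 ∧
         cabinetTOthing C T2 ∧ personTOthing P2 T2 ∧ P1 < P2) := by
  rintro C T1 T2 P1 P2 ⟨h1, h2, h3, h4, h5⟩
  obtain ⟨R, hR⟩ := H3 C (H2 C (H1 C T1 h1))
  exact H4 R C T1 T2 P1 P2 ⟨hR, h1, h2, h3, h4, h5⟩
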